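/- arXiv:2104.15031 — 2 statements merged into one kernel-verified Lean document; each statement's English description precedes it below -/
import Mathlib

section
/- Let κ be a regular uncountable cardinal and suppose Pr₁(κ, κ, θ, χ+χ) holds. Then Pr₁⁺(κ, θ, χ) holds: there is a coloring o : [κ]² → θ such that o(α,β) < α for all 0 < α < β < κ, and for all ζ < θ, σ < χ, and every pairwise disjoint family 𝒜 ⊆ [κ]^σ of size κ, there exists γ < κ such that for every b ∈ [κ∖γ]^σ there is some a ∈ 𝒜 with a ⊆ γ and o constantly equal to ζ on a × b. -/
open Cardinal Ordinal Set

noncomputable section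

/-- The order type of a set of ordinals. -/
def otp (s : Set Ordinal) : Ordinal := Ordinal.type ((· < ·) : s → s → Prop)

/-- `a < b` for sets of ordinals: every element of `a` is below every element of `b`. -/
def SetLT (a b : Set Ordinal.{0}) : Prop := ∀ α ∈ a, ∀ β ∈ b, α < β

/-- `A` is a pairwise disjoint subfamily of `[κ]^σ`:
a family of subsets of (ordinals below) `κ` of order type `σ`, pairwise disjoint. -/
def IsFamily (κ σ : Ordinal.{0}) (A : Set (Set Ordinal)) : Prop :=
  (∀ a ∈ A, a ⊆ Set.Iio κ ∧ otp a = Ordinal.lift.{1} σ) ∧ A.PairwiseDisjoint id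

/-- Shelah's principle `Pr₁(κ, κ, θ, χ)`. -/
def Pr1 (κ θ χ : Cardinal.{0}) : Prop :=
  ∃ c : Ordinal → Ordinal → Ordinal,
    (∀ α β : Ordinal, α < β → β < κ.ord → c α β < θ.ord) ∧
    ∀ σ : Ordinal, σ < χ.ord → ∀ A : Set (Set Ordinal),
      IsFamily κ.ord σ A → #A = Cardinal.lift.{1} κ →
      ∀ τ : Ordinal, τ < θ.ord →
        ∃ a ∈ A, ∃ b ∈ A, SetLT a b ∧ ∀ α ∈ a, ∀ β ∈ b, c α β = τ
/-- `D` is a club (closed unbounded set) in `κ`. -/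
def ClubIn (D : Set Ordinal.{0}) (κ : Ordinal.{0}) : Prop :=
  D ⊆ Set.Iio κ ∧ (∀ α < κ, ∃ β ∈ D, α ≤ β) ∧
    ∀ δ < κ, 0 < δ → (∀ γ < δ, ∃ x ∈ D, γ < x ∧ x < δ) → δ ∈ D

/-- `S` is a stationary subset of `κ`. -/
def StatIn (S : Set Ordinal.{0}) (κ : Ordinal.{0}) : Prop :=
  S ⊆ Set.Iio κ ∧ ∀ D : Set Ordinal, ClubIn D κ → (S ∩ D).Nonempty

/-- `δ` is an accumulation point belonging to `s`, i.e. `δ ∈ acc(s)`: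
`δ ∈ s` and `sup(s ∩ δ) = δ > 0`. -/
def IsAccOf (s : Set Ordinal.{0}) (δ : Ordinal.{0}) : Prop :=
  δ ∈ s ∧ 0 < δ ∧ ∀ γ < δ, ∃ x ∈ s, γ < x ∧ x < δ

/-- `C` is a C-sequence over `κ`: each `C α` is a closed subset of `α`
with `sup (C α) = sup α`. -/
def IsCSeq (κ : Ordinal.{0}) (C : Ordinal.{0} → Set Ordinal.{0}) : Prop :=
  (∀ α < κ, C α ⊆ Set.Iio α) ∧
  (∀ α < κ, ∀ δ, 0 < δ → δ < α → (∀ γ < δ, ∃ x ∈ C α, γ < x ∧ x < δ) → δ ∈ C α) ∧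
  (∀ α < κ, ∀ γ : Ordinal, (∀ x ∈ C α, x ≤ γ) → ∀ δ < α, δ ≤ γ)

/-- The upper trace of the walk from `β` down to `α` along the C-sequence `C`. -/
def Tr (C : Ordinal.{0} → Set Ordinal.{0}) (α β : Ordinal.{0}) : ℕ → Ordinal.{0}
  | 0 => β
  | n + 1 => if α < Tr C α β n then sInf (C (Tr C α β n) ∩ Set.Ici α) else α

/-- The length `ρ₂(α,β)` of the walk from `β` down to `α`. -/
def rho2 (C : Ordinal.{0} → Set Ordinal.{0}) (α β : Ordinal.{0}) : ℕ :=
  sInf {n | Tr C α β n = α}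

/-- The (finite) trace `tr(α,β)` of the walk, as a list. -/
def trL (C : Ordinal.{0} → Set Ordinal.{0}) (α β : Ordinal.{0}) : List Ordinal.{0} :=
  (List.range (rho2 C α β)).map (Tr C α β)

/-- `λ(α,β) = max_{i<ρ₂(α,β)} sup (C_{Tr(α,β)(i)} ∩ α)`. -/
def lamb (C : Ordinal.{0} → Set Ordinal.{0}) (α β : Ordinal.{0}) : Ordinal.{0} :=
  (Finset.range (rho2 C α β)).sup fun i => sSup (C (Tr C α β i) ∩ Set.Iio α)

/-- `η_{α,β} := min { n < ω ∣ η ∈ C_{Tr(α,β)(n)} or n = ρ₂(α,β) } + 1`. -/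
def etaIdx (C : Ordinal.{0} → Set Ordinal.{0}) (η α β : Ordinal.{0}) : ℕ :=
  sInf {n | η ∈ C (Tr C α β n) ∨ n = rho2 C α β} + 1

/-- The transformation principle `Pℓ₁(κ, θ, χ)`. -/
def Pl1 (κ θ χ : Cardinal.{0}) : Prop :=
  ∃ t : Ordinal.{0} → Ordinal.{0} → Ordinal.{0} × Ordinal.{0} × Ordinal.{0},
    (∀ α β : Ordinal, α < β → β < κ.ord →
      (t α β).1 ≤ (t α β).2.1 ∧ (t α β).2.1 ≤ α ∧ α < (t α β).2.2 ∧ (t α β).2.2 ≤ β) ∧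
    ∀ σ : Ordinal, σ < χ.ord → ∀ A : Set (Set Ordinal),
      IsFamily κ.ord σ A → #A = Cardinal.lift.{1} κ →
      ∃ S : Set Ordinal, StatIn S κ.ord ∧
        ∀ αs ∈ S, ∀ βs ∈ S, αs < βs →
          ∀ τ : Ordinal, τ < θ.ord → τ < αs →
            ∃ a ∈ A, ∃ b ∈ A, SetLT a b ∧
              ∀ α ∈ a, ∀ β ∈ b, t α β = (τ, αs, βs)

/-- The transformation principle `Pℓ₂(κ, Γ, χ)`. -/
def Pl2 (κ : Cardinal.{0}) (Γ : Set Ordinal.{0}) (χ : Cardinal.{0}) : Prop :=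
  ∃ t : Ordinal.{0} → Ordinal.{0} → Ordinal.{0} × Ordinal.{0},
    (∀ α β : Ordinal, α < β → β < κ.ord →
      (t α β).1 ≤ α ∧ α < (t α β).2 ∧ (t α β).2 ≤ β) ∧
    ∀ σ : Ordinal, σ < χ.ord → ∀ A : Set (Set Ordinal),
      IsFamily κ.ord σ A → #A = Cardinal.lift.{1} κ →
      ∃ D : Set Ordinal, ClubIn D κ.ord ∧
        ∀ αs ∈ Γ ∩ D, ∀ βs ∈ Γ ∩ D, αs < βs →
          ∃ a ∈ A, ∃ b ∈ A, SetLT a b ∧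
            ∀ α ∈ a, ∀ β ∈ b, t α β = (αs, βs)

/-- The principle `Pr₁⁺(κ, θ, χ)`. -/
def Pr1plus (κ θ χ : Cardinal.{0}) : Prop :=
  ∃ o : Ordinal.{0} → Ordinal.{0} → Ordinal.{0},
    (∀ α β : Ordinal, 0 < α → α < β → β < κ.ord → o α β < α ∧ o α β < θ.ord) ∧
    ∀ ζ : Ordinal, ζ < θ.ord → ∀ σ : Ordinal, σ < χ.ord →
      ∀ A : Set (Set Ordinal), IsFamily κ.ord σ A → #A = Cardinal.lift.{1} κ →
        ∃ γ < κ.ord, ∀ b : Set Ordinal,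
          b ⊆ Set.Iio κ.ord → b ⊆ Set.Ici γ → otp b = Ordinal.lift.{1} σ →
          ∃ a ∈ A, a ⊆ Set.Iio γ ∧ ∀ α ∈ a, ∀ β ∈ b, o α β = ζ

/-- The oscillation principle `Pℓ₆(κ, χ)`. -/
def Pl6 (κ χ : Cardinal.{0}) : Prop :=
  ∃ d : List Ordinal.{0} → ℕ,
    ∀ (u v : Ordinal.{0} → Set (List Ordinal.{0}))
      (s : Ordinal.{0} → List Ordinal.{0}) (φ : Ordinal.{0} → Ordinal.{0}),
      (∃ ε < κ.ord, ∀ α : Ordinal, ε ≤ α → α < κ.ord → φ α < α) →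
      (∀ α < κ.ord, (u α).Nonempty ∧ #(u α) < Cardinal.lift.{1} χ ∧
        ∀ ϱ ∈ u α, (∀ x ∈ ϱ, x < κ.ord) ∧ α ∈ ϱ) →
      (∀ α < κ.ord, (v α).Nonempty ∧ #(v α) < Cardinal.lift.{1} χ ∧
        ∀ σl ∈ v α, (∀ x ∈ σl, x < κ.ord) ∧ (s α ++ [α]) <+: σl) →
      ∃ α β : Ordinal, α < β ∧ β < κ.ord ∧ φ α = φ β ∧
        ∀ ϱ ∈ u α, ∀ σl ∈ v β, d (ϱ ++ σl) = ϱ.length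

/-- Shelah's principle `Pr₆(κ, κ, θ, χ)`. -/
def Pr6 (κ θ χ : Cardinal.{0}) : Prop :=
  ∃ d : List Ordinal.{0} → Ordinal.{0},
    (∀ l, d l < θ.ord) ∧
    ∀ τ : Ordinal, τ < θ.ord → ∀ E : Set Ordinal, ClubIn E κ.ord →
      ∀ u v : Ordinal.{0} → Set (List Ordinal.{0}),
        (∀ α ∈ E, (u α).Nonempty ∧ #(u α) < Cardinal.lift.{1} χ ∧
          ∀ ϱ ∈ u α, (∀ x ∈ ϱ, x < κ.ord) ∧ α ∈ ϱ) →
        (∀ α ∈ E, (v α).Nonempty ∧ #(v α) < Cardinal.lift.{1} χ ∧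
          ∀ σl ∈ v α, (∀ x ∈ σl, x < κ.ord) ∧ α ∈ σl) →
        ∃ α ∈ E, ∃ β ∈ E, α < β ∧
          ∀ ϱ ∈ u α, ∀ σl ∈ v β, d (ϱ ++ σl) = τ

/-- The square principle `□(κ)`. -/
def SquarePrin (κ : Ordinal.{0}) : Prop :=
  ∃ C : Ordinal.{0} → Set Ordinal.{0},
    (∀ α < κ, C α ⊆ Set.Iio α) ∧
    (∀ α < κ, Order.IsSuccLimit α →
      (∀ γ < α, ∃ x ∈ C α, γ < x) ∧
      (∀ δ < α, 0 < δ → (∀ γ < δ, ∃ x ∈ C α, γ < x ∧ x < δ) → δ ∈ C α)) ∧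
    (∀ α < κ, ∀ δ, IsAccOf (C α) δ → C α ∩ Set.Iio δ = C δ) ∧
    ¬ ∃ D : Set Ordinal, ClubIn D κ ∧ ∀ δ, IsAccOf D δ → D ∩ Set.Iio δ = C δ

/-- The stick principle `⫯(κ)` (with witnesses of size `μ`). -/
def Stick (κ μ : Cardinal.{0}) : Prop :=
  ∃ X : Ordinal.{0} → Set Ordinal.{0},
    (∀ γ < κ.ord, X γ ⊆ Set.Iio κ.ord) ∧
    ∀ Y : Set Ordinal, Y ⊆ Set.Iio κ.ord → #Y = Cardinal.lift.{1} κ →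
      ∃ γ < κ.ord, X γ ⊆ Y ∧ #(X γ) = Cardinal.lift.{1} μ

/-- A filter is `λ`-complete: it is closed under intersections of fewer than `λ` sets. -/
def FilterComplete (lam : Cardinal.{0}) {α : Type 1} (F : Filter α) : Prop :=
  ∀ ι : Type 1, #ι < Cardinal.lift.{1} lam →
    ∀ f : ι → Set α, (∀ i, f i ∈ F) → (⋂ i, f i) ∈ F

/-- `lam` is a strongly compact cardinal: every `lam`-complete (proper) filter
extends to a `lam`-complete ultrafilter. -/
def IsStronglyCompact (lam : Cardinal.{0}) : Prop :=
  ∀ (α : Type 1) (F : Filter α), F.NeBot → FilterComplete lam F →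
    ∃ U : Ultrafilter α, (↑U : Filter α) ≤ F ∧ FilterComplete lam (↑U : Filter α)

/-- `last(α,β)`: `α` if `λ(α,β) < α`, and otherwise `min(im(tr(α,β)))`. -/
def lastStep (C : Ordinal.{0} → Set Ordinal.{0}) (α β : Ordinal.{0}) : Ordinal.{0} :=
  if lamb C α β < α then α else sInf {x | ∃ i < rho2 C α β, Tr C α β i = x}

/-!
Take `o(α, β) = c(α, β)` when `c(α, β) < α` and `o(α, β) = 0` otherwise. If `ζ`, `σ`, `A`
admit no `γ`, choose for every `γ < κ` a witness `b_γ ⊆ κ ∖ γ` of type `σ`. Using the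
regularity of `κ`, pick recursively `a_i ∈ A` above `ζ` and above all earlier blocks, a bound
`γ_i` of `a_i`, and the block `a_i ∪ b_{γ_i}`: the blocks form a disjoint family of size `κ`
of type `σ + σ`. `Pr₁` yields blocks `i`, `j` with `c ≡ ζ` on their product, so `a_i ⊆ γ_j`
and `o = c = ζ` on `a_i × b_{γ_j}` (as `ζ < min a_i`), contradicting the choice of `b_{γ_j}`.
-/

lemma mk_eq_of_otp_eq {s : Set Ordinal.{0}} {ρ : Ordinal.{0}} (h : otp s = Ordinal.lift.{1} ρ) :
    #s = Cardinal.lift.{1} ρ.card := by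
  rw [← Ordinal.card_type ((· < ·) : s → s → Prop), ← otp, h, Ordinal.lift_card]

lemma mk_lt_of_otp_eq {κ : Cardinal.{0}} {s : Set Ordinal.{0}} {ρ : Ordinal.{0}}
    (hρ : ρ < κ.ord) (hs : otp s = Ordinal.lift.{1} ρ) : #s < Cardinal.lift.{1} κ := by
  rw [mk_eq_of_otp_eq hs, Cardinal.lift_lt]
  exact Cardinal.lt_ord.1 hρ

lemma otp_eq_zero_iff {s : Set Ordinal.{0}} : otp s = 0 ↔ s = ∅ := by
  rw [otp, Ordinal.type_eq_zero_iff_isEmpty, Set.isEmpty_coe_sort]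

lemma SetLT.disjoint {a b : Set Ordinal.{0}} (h : SetLT a b) : Disjoint a b :=
  Set.disjoint_left.2 fun x hxa hxb => (h x hxa x hxb).false

lemma otp_union_of_setLT {a b : Set Ordinal.{0}} (h : SetLT a b) :
    otp (a ∪ b) = otp a + otp b := by
  classical
  rw [otp, otp, otp, ← Ordinal.type_sum_lex]
  refine (Ordinal.type_eq.2 ⟨⟨(Equiv.Set.union h.disjoint).symm, ?_⟩⟩).symm
  rintro (⟨x, hx⟩ | ⟨x, hx⟩) (⟨y, hy⟩ | ⟨y, hy⟩)
  · simp
  · simpa using h x hx y hy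
  · simpa using (h y hy x hx).le
  · simp

lemma exists_lt_ord_subset_Iio {κ : Cardinal.{0}} (hκ : κ.IsRegular) {s : Set Ordinal.{0}}
    (hs : s ⊆ Iio κ.ord) (hc : #s < Cardinal.lift.{1} κ) : ∃ γ < κ.ord, s ⊆ Iio γ := by
  have hbdd : BddAbove ((· + 1) '' s) := ⟨κ.ord, by
    rintro _ ⟨x, hx, rfl⟩
    exact Order.add_one_le_of_lt (hs hx)⟩
  refine ⟨sSup ((· + 1) '' s), Ordinal.sSup_add_one_lt_of_lt_cof ?_ hs, fun x hx => ?_⟩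
  · rwa [← Ordinal.lift_cof, hκ.cof_ord]
  · exact (Order.lt_add_one_iff.2 le_rfl).trans_le (le_csSup hbdd (mem_image_of_mem _ hx))

def supSeq (h : Ordinal.{0} → Ordinal.{0}) (i : Ordinal.{0}) : Ordinal.{0} :=
  ⨆ j : Iio i, h (supSeq h j)
termination_by i
decreasing_by exact j.2

lemma le_supSeq (h : Ordinal.{0} → Ordinal.{0}) {i j : Ordinal.{0}} (hji : j < i) :
    h (supSeq h j) ≤ supSeq h i := by
  conv_rhs => rw [supSeq]
  exact le_ciSup (f := fun j : Iio i => h (supSeq h j)) Ordinal.bddAbove_of_small ⟨j, hji⟩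

lemma supSeq_lt {κ : Cardinal.{0}} (hκ : κ.IsRegular) {h : Ordinal.{0} → Ordinal.{0}}
    (hh : ∀ ε < κ.ord, h ε < κ.ord) {i : Ordinal.{0}} (hi : i < κ.ord) : supSeq h i < κ.ord := by
  induction i using WellFoundedLT.induction with
  | _ i ih =>
    rw [supSeq]
    refine Ordinal.lift_iSup_lt_of_lt_cof ?_ fun j => hh _ (ih j j.2 (j.2.trans hi))
    rw [Cardinal.mk_Iio_ordinal, Cardinal.lift_uzero, ← Ordinal.lift_cof, hκ.cof_ord,
      Cardinal.lift_lt]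
    exact Cardinal.lt_ord.1 hi

lemma exists_setLT_seq {κ : Cardinal.{0}} (hκ : κ.IsRegular) {f : Ordinal.{0} → Set Ordinal.{0}}
    (hf : ∀ ε < κ.ord, f ε ⊆ Ico ε κ.ord ∧ #(f ε) < Cardinal.lift.{1} κ) :
    ∃ e : Ordinal.{0} → Ordinal.{0}, (∀ i < κ.ord, e i < κ.ord) ∧
      ∀ i j, i < j → j < κ.ord → SetLT (f (e i)) (f (e j)) := by
  choose! h hh hfh using fun ε (hε : ε < κ.ord) =>
    exists_lt_ord_subset_Iio hκ ((hf ε hε).1.trans Ico_subset_Iio_self) (hf ε hε).2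
  have he : ∀ i < κ.ord, supSeq h i < κ.ord := fun i => supSeq_lt hκ hh
  refine ⟨supSeq h, he, fun i j hij hj x hx y hy => ?_⟩
  calc x < h (supSeq h i) := hfh _ (he i (hij.trans hj)) hx
    _ ≤ supSeq h j := le_supSeq h hij
    _ ≤ y := ((hf _ (he j hj)).1 hy).1

lemma isFamily_image_of_setLT {κ ρ : Ordinal.{0}} {f : Ordinal.{0} → Set Ordinal.{0}}
    (hf : ∀ i < κ, f i ⊆ Iio κ ∧ otp (f i) = Ordinal.lift.{1} ρ)
    (hlt : ∀ i j, i < j → j < κ → SetLT (f i) (f j)) : IsFamily κ ρ (f '' Iio κ) := by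
  refine ⟨?_, ?_⟩
  · rintro _ ⟨i, hi, rfl⟩
    exact hf i hi
  · rintro _ ⟨i, hi, rfl⟩ _ ⟨j, hj, rfl⟩ hne
    rcases lt_or_gt_of_ne fun hij => hne (congrArg f hij) with hij | hij
    · exact (hlt i j hij hj).disjoint
    · exact (hlt j i hij hi).disjoint.symm

lemma mk_image_of_setLT {κ : Ordinal.{0}} {f : Ordinal.{0} → Set Ordinal.{0}}
    (hne : ∀ i < κ, (f i).Nonempty) (hlt : ∀ i j, i < j → j < κ → SetLT (f i) (f j)) :
    #(f '' Iio κ) = Cardinal.lift.{1} κ.card := by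
  rw [Cardinal.mk_image_eq_of_injOn, Cardinal.mk_Iio_ordinal]
  intro i hi j hj hij
  by_contra hne'
  wlog hij' : i < j generalizing i j
  · exact this hj hi hij.symm (Ne.symm hne') ((not_lt.1 hij').lt_of_ne (Ne.symm hne'))
  obtain ⟨x, hx⟩ := hne i hi
  exact (hlt i j hij' hj x hx x (hij ▸ hx)).false

lemma exists_mem_forall_le_of_pairwiseDisjoint {A : Set (Set Ordinal.{0})}
    (hA : A.PairwiseDisjoint id) {ε : Ordinal.{0}} (hε : Cardinal.lift.{1} ε.card < #A) :
    ∃ a ∈ A, ∀ x ∈ a, ε ≤ x := by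
  by_contra! hcon
  choose g hgA hgε using hcon
  have hinj : Function.Injective fun a : A => (⟨g a a.2, hgε a a.2⟩ : Iio ε) := by
    rintro ⟨a, ha⟩ ⟨b, hb⟩ hab
    have hg : g a ha = g b hb := congrArg Subtype.val hab
    by_contra hne
    exact Set.disjoint_left.1 (hA ha hb fun h => hne (Subtype.ext h)) (hgA a ha) (hg ▸ hgA b hb)
  exact hε.not_ge ((Cardinal.mk_le_of_injective hinj).trans_eq (Cardinal.mk_Iio_ordinal ε))

lemma IsFamily.nonempty_of_mem {κ σ : Ordinal.{0}} {A : Set (Set Ordinal.{0})}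
    (hA : IsFamily κ σ A) (hA1 : 1 < #A) {a : Set Ordinal.{0}} (ha : a ∈ A) : a.Nonempty := by
  rw [Set.nonempty_iff_ne_empty]
  intro h0
  have hsub : A ⊆ {∅} := fun b hb => by
    rw [mem_singleton_iff, ← otp_eq_zero_iff, (hA.1 b hb).2, ← (hA.1 a ha).2, otp_eq_zero_iff]
    exact h0
  exact hA1.not_ge ((Cardinal.mk_le_mk_of_subset hsub).trans_eq (Cardinal.mk_singleton _))

lemma IsFamily.exists_mem_subset_Ico {κ : Cardinal.{0}} (hκ : κ.IsRegular) {σ : Ordinal.{0}}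
    (hσ : σ < κ.ord) {A : Set (Set Ordinal)} (hA : IsFamily κ.ord σ A)
    (hAcard : #A = Cardinal.lift.{1} κ) {ε : Ordinal.{0}} (hε : ε < κ.ord) :
    ∃ a ∈ A, ∃ γ < κ.ord, a.Nonempty ∧ a ⊆ Ico ε γ := by
  obtain ⟨a, haA, hεa⟩ := exists_mem_forall_le_of_pairwiseDisjoint hA.2 (ε := ε) (by
    rw [hAcard, Cardinal.lift_lt]
    exact Cardinal.lt_ord.1 hε)
  obtain ⟨γ, hγ, haγ⟩ :=
    exists_lt_ord_subset_Iio hκ (hA.1 a haA).1 (mk_lt_of_otp_eq hσ (hA.1 a haA).2)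
  have hA1 : 1 < #A := by
    rw [hAcard, Cardinal.one_lt_lift_iff]
    exact Cardinal.one_lt_aleph0.trans_le hκ.aleph0_le
  exact ⟨a, haA, γ, hγ, hA.nonempty_of_mem hA1 haA, fun x hx => ⟨hεa x hx, haγ hx⟩⟩

lemma IsFamily.exists_mem_const_on_prod {κ : Cardinal.{0}} (hκ : κ.IsRegular)
    {c : Ordinal.{0} → Ordinal.{0} → Ordinal.{0}} {σ ζ : Ordinal.{0}}
    (hc : ∀ A : Set (Set Ordinal), IsFamily κ.ord (σ + σ) A → #A = Cardinal.lift.{1} κ →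
      ∃ a ∈ A, ∃ b ∈ A, SetLT a b ∧ ∀ α ∈ a, ∀ β ∈ b, c α β = ζ)
    (hσ : σ < κ.ord) {A : Set (Set Ordinal)} (hA : IsFamily κ.ord σ A)
    (hAcard : #A = Cardinal.lift.{1} κ) {B : Ordinal.{0} → Set Ordinal.{0}}
    (hB : ∀ γ < κ.ord, B γ ⊆ Ico γ κ.ord ∧ otp (B γ) = Ordinal.lift.{1} σ)
    {ε : Ordinal.{0}} (hε : ε < κ.ord) :
    ∃ a ∈ A, ∃ γ < κ.ord, a ⊆ Ico ε γ ∧ ∀ α ∈ a, ∀ β ∈ B γ, c α β = ζ := by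
  choose! a haA γ hγ hane haIco using fun ε' (hε' : ε' < κ.ord) =>
    hA.exists_mem_subset_Ico hκ hσ hAcard (max_lt hε hε')
  have hblk : ∀ ε' < κ.ord, a ε' ∪ B (γ ε') ⊆ Ico ε' κ.ord ∧
      otp (a ε' ∪ B (γ ε')) = Ordinal.lift.{1} (σ + σ) := fun ε' hε' => by
    obtain ⟨hBIco, hBotp⟩ := hB _ (hγ ε' hε')
    obtain ⟨y, hy⟩ := hane ε' hε'
    have hlt : SetLT (a ε') (B (γ ε')) := fun x hx z hz =>
      (haIco ε' hε' hx).2.trans_le (hBIco hz).1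
    refine ⟨?_, by rw [otp_union_of_setLT hlt, (hA.1 _ (haA ε' hε')).2, hBotp, Ordinal.lift_add]⟩
    calc a ε' ∪ B (γ ε') ⊆ Ico (max ε ε') (γ ε') ∪ Ico (γ ε') κ.ord :=
          union_subset_union (haIco ε' hε') hBIco
      _ = Ico (max ε ε') κ.ord :=
          Ico_union_Ico_eq_Ico ((haIco ε' hε' hy).1.trans (haIco ε' hε' hy).2.le) (hγ ε' hε').le
      _ ⊆ Ico ε' κ.ord := Ico_subset_Ico_left (le_max_right _ _)
  obtain ⟨e, he, hlt⟩ := exists_setLT_seq hκ fun ε' hε' =>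
    ⟨(hblk ε' hε').1, mk_lt_of_otp_eq (isPrincipal_add_ord hκ.aleph0_le hσ hσ) (hblk ε' hε').2⟩
  have hfam := isFamily_image_of_setLT (κ := κ.ord) (f := fun i => a (e i) ∪ B (γ (e i)))
    (fun i hi => ⟨(hblk _ (he i hi)).1.trans Ico_subset_Iio_self, (hblk _ (he i hi)).2⟩) hlt
  have hcard : #((fun i => a (e i) ∪ B (γ (e i))) '' Iio κ.ord) = Cardinal.lift.{1} κ := by
    rw [mk_image_of_setLT (fun i hi => (hane _ (he i hi)).mono subset_union_left) hlt,
      Cardinal.card_ord]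
  obtain ⟨_, ⟨i, hi, rfl⟩, _, ⟨j, hj, rfl⟩, hij, hcij⟩ := hc _ hfam hcard
  obtain ⟨y, hy⟩ := hane _ (he j hj)
  refine ⟨a (e i), haA _ (he i hi), γ (e j), hγ _ (he j hj), fun x hx => ⟨?_, ?_⟩,
    fun α hα β hβ => hcij α (Or.inl hα) β (Or.inr hβ)⟩
  · exact (le_max_left _ _).trans (haIco _ (he i hi) hx).1
  · exact (hij x (Or.inl hx) y (Or.inl hy)).trans (haIco _ (he j hj) hy).2

def truncColoring (c : Ordinal.{0} → Ordinal.{0} → Ordinal.{0}) (α β : Ordinal.{0}) :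
    Ordinal.{0} :=
  if c α β < α then c α β else 0

theorem Pr1plus_of_Pr1_general (κ θ χ : Cardinal.{0})
    (hreg : κ.IsRegular) (hθ : θ ≤ κ) (hχ : χ ≤ κ)
    (h : Pr1 κ θ (χ + χ)) : Pr1plus κ θ χ := by
  obtain ⟨c, hcθ, hc⟩ := h
  have hκω : ω ≤ κ.ord := omega0_le_ord.2 hreg.aleph0_le
  have hθ0 : 0 < θ.ord :=
    zero_le.trans_lt (hcθ 0 1 zero_lt_one (one_lt_omega0.trans_le hκω))
  refine ⟨truncColoring c, fun α β hα hαβ hβ => ?_, fun ζ hζ σ hσ A hA hAcard => ?_⟩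
  · unfold truncColoring
    split_ifs with hcα
    exacts [⟨hcα, hcθ α β hαβ hβ⟩, ⟨hα, hθ0⟩]
  have hσσ : σ + σ < (χ + χ).ord := by
    have hσχ := Cardinal.lt_ord.1 hσ
    rw [Cardinal.lt_ord, card_add]
    exact Cardinal.add_lt_add hσχ hσχ
  have hζ1 : ζ + 1 < κ.ord := isPrincipal_add_ord hreg.aleph0_le
    (hζ.trans_le (ord_le_ord.2 hθ)) (one_lt_omega0.trans_le hκω)
  by_contra! hbad
  choose! B hBκ hBγ hBotp hBbad using hbad
  obtain ⟨a, haA, γ, hγ, haIco, hcζ⟩ := hA.exists_mem_const_on_prod hreg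
    (fun A' hA' hA'card => hc _ hσσ A' hA' hA'card ζ hζ) (hσ.trans_le (ord_le_ord.2 hχ)) hAcard
    (fun γ hγ => ⟨fun x hx => ⟨hBγ γ hγ hx, hBκ γ hγ hx⟩, hBotp γ hγ⟩) hζ1
  obtain ⟨α, hα, β, hβ, hne⟩ := hBbad γ hγ a haA fun x hx => (haIco hx).2
  have hζα : ζ < α := (Order.lt_add_one_iff.2 le_rfl).trans_le (haIco hα).1
  exact hne (by rw [truncColoring, hcζ α hα β hβ, if_pos hζα])

/-- If `Pr₁(κ, κ, θ, χ+χ)` holds for a regular uncountable `κ`,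
then `Pr₁⁺(κ, θ, χ)` holds. -/
theorem Pr1plus_of_Pr1 (κ θ χ : Cardinal.{0})
    (hreg : κ.IsRegular) (hκ : ℵ₀ < κ) (hθ : θ ≤ κ) (hχ : χ ≤ κ)
    (h : Pr1 κ θ (χ + χ)) : Pr1plus κ θ χ :=
  Pr1plus_of_Pr1_general κ θ χ hreg hθ hχ h

end
end

section
/- Let κ be a regular uncountable cardinal, ⟨C_α | α < κ⟩ a C-sequence, with derived functions tr and λ from walks. For all α < δ < β < κ with δ ∈ im(tr(α,β)), λ(α,β) = max{λ(δ,β), λ(α,δ)}. -/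
open Cardinal Ordinal Set

noncomputable section

/-! Until it reaches `δ`, the walk from `β` down to `α` stays strictly above `δ`, so at each of
those steps `min (C_γ ∖ α) = min (C_γ ∖ δ)` and `C_γ ∩ α = C_γ ∩ δ`. Hence `tr(α,β)` is `tr(δ,β)`
followed by `tr(α,δ)`, and the maximum defining `λ(α,β)` splits into the two maxima. -/

section CsInf

variable {γ : Type*} [ConditionallyCompleteLinearOrderBot γ] {s : Set γ} {a b : γ}

lemma inter_Ici_eq_of_le_csInf (hab : a ≤ b) (h : b ≤ sInf (s ∩ Ici a)) :
    s ∩ Ici b = s ∩ Ici a := by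
  ext x
  exact ⟨fun ⟨hx, hbx⟩ => ⟨hx, hab.trans hbx⟩,
    fun ⟨hx, hax⟩ => ⟨hx, h.trans (csInf_le' ⟨hx, hax⟩)⟩⟩

lemma inter_Iio_eq_of_le_csInf (hab : a ≤ b) (h : b ≤ sInf (s ∩ Ici a)) :
    s ∩ Iio b = s ∩ Iio a := by
  ext x
  exact ⟨fun ⟨hx, hxb⟩ => ⟨hx, lt_of_not_ge fun hax => (h.trans (csInf_le' ⟨hx, hax⟩)).not_gt hxb⟩,
    fun ⟨hx, hxa⟩ => ⟨hx, hxa.trans_le hab⟩⟩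

end CsInf

section Walk

variable {C : Ordinal.{0} → Set Ordinal.{0}} {α δ β : Ordinal.{0}} {i j k : ℕ}

lemma Tr_add :
    Tr C α β (k + j) = Tr C α (Tr C α β k) j := by
  induction j with
  | zero => rfl
  | succ j ih => rw [← Nat.add_assoc, Tr, Tr, ih]

lemma Tr_succ_of_lt (h : α < Tr C α β i) :
    Tr C α β (i + 1) = sInf (C (Tr C α β i) ∩ Ici α) :=
  if_pos h

lemma lt_Tr_of_succ_lt_rho2 (h : i + 1 < rho2 C α β) : α < Tr C α β i := by
  by_contra hle
  have hstop : Tr C α β (i + 1) = α := if_neg hle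
  exact (Nat.sInf_le hstop).not_gt h

lemma Tr_succ_lt (h : α < Tr C α β i) (hC : C (Tr C α β i) ⊆ Iio (Tr C α β i)) :
    Tr C α β (i + 1) < Tr C α β i := by
  rw [Tr_succ_of_lt h]
  rcases (C (Tr C α β i) ∩ Ici α).eq_empty_or_nonempty with hempty | hne
  · rw [hempty, Ordinal.sInf_empty]
    exact zero_le.trans_lt h
  · exact hC (csInf_mem hne).1

lemma Tr_lt_Tr (hC : ∀ γ ≤ β, C γ ⊆ Iio γ) (hj : j < rho2 C α β) (hij : i < j) :
    Tr C α β j < Tr C α β i := by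
  induction j generalizing i with
  | zero => omega
  | succ j ih =>
    have hle : Tr C α β j ≤ β := by
      rcases j with _ | j
      · exact le_rfl
      · exact (ih (by omega) j.succ_pos).le
    have hstep := Tr_succ_lt (lt_Tr_of_succ_lt_rho2 hj) (hC _ hle)
    rcases Nat.lt_succ_iff_lt_or_eq.1 hij with hij | rfl
    · exact hstep.trans (ih (by omega) hij)
    · exact hstep

lemma exists_Tr_eq_of_lt_rho2 (hk : k < rho2 C α β) : ∃ n, Tr C α β n = α :=
  Nat.nonempty_of_pos_sInf (k.zero_le.trans_lt hk)

lemma rho2_eq_of_Tr_eq (hk : Tr C α β k = α) (hne : ∀ i < k, Tr C α β i ≠ α) :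
    rho2 C α β = k :=
  le_antisymm (Nat.sInf_le hk) (le_csInf ⟨k, hk⟩ fun n hn => not_lt.1 fun h => hne n h hn)

lemma rho2_eq_add (hreach : ∃ n, Tr C α β n = α) (hk : k ≤ rho2 C α β) :
    rho2 C α β = k + rho2 C α (Tr C α β k) := by
  have hrest : Tr C α (Tr C α β k) (rho2 C α β - k) = α := by
    rw [← Tr_add, Nat.add_sub_cancel' hk]
    exact Nat.sInf_mem hreach
  have hle : rho2 C α (Tr C α β k) ≤ rho2 C α β - k := Nat.sInf_le hrest
  have hge : rho2 C α β ≤ k + rho2 C α (Tr C α β k) := by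
    refine Nat.sInf_le (?_ : Tr C α β _ = α)
    rw [Tr_add]
    exact Nat.sInf_mem (s := {n | Tr C α _ n = α}) ⟨_, hrest⟩
  omega

lemma lamb_eq_max (hreach : ∃ n, Tr C α β n = α) (hk : k ≤ rho2 C α β) :
    lamb C α β = max ((Finset.range k).sup fun i => sSup (C (Tr C α β i) ∩ Iio α))
      (lamb C α (Tr C α β k)) := by
  rw [lamb, rho2_eq_add hreach hk, Finset.range_add, Finset.sup_union, Finset.sup_map]
  simp only [lamb, Function.comp_def, addLeftEmbedding_apply, Tr_add]

lemma le_csInf_C_Tr_of_passes (hαδ : α ≤ δ) (hk : Tr C α β k = δ)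
    (hpass : ∀ i < k, δ < Tr C α β i) (hi : i < k) :
    δ ≤ sInf (C (Tr C α β i) ∩ Ici α) := by
  rw [← Tr_succ_of_lt (hαδ.trans_lt (hpass i hi))]
  rcases (show i + 1 ≤ k from hi).lt_or_eq with h | h
  · exact (hpass _ h).le
  · rw [h, hk]

lemma Tr_eq_of_passes (hαδ : α ≤ δ) (hk : Tr C α β k = δ)
    (hpass : ∀ i < k, δ < Tr C α β i) (hi : i ≤ k) : Tr C δ β i = Tr C α β i := by
  induction i with
  | zero => rfl
  | succ i ih =>
    have hi : i < k := hi
    have hδ : δ < Tr C δ β i := ih hi.le ▸ hpass i hi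
    rw [Tr_succ_of_lt hδ, Tr_succ_of_lt (hαδ.trans_lt (hpass i hi)), ih hi.le,
      inter_Ici_eq_of_le_csInf hαδ (le_csInf_C_Tr_of_passes hαδ hk hpass hi)]

lemma rho2_eq_of_passes (hαδ : α ≤ δ) (hk : Tr C α β k = δ)
    (hpass : ∀ i < k, δ < Tr C α β i) : rho2 C δ β = k :=
  rho2_eq_of_Tr_eq ((Tr_eq_of_passes hαδ hk hpass le_rfl).trans hk) fun i hi =>
    (Tr_eq_of_passes hαδ hk hpass hi.le).trans_ne (hpass i hi).ne'

lemma lamb_eq_of_passes (hαδ : α ≤ δ) (hk : Tr C α β k = δ)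
    (hpass : ∀ i < k, δ < Tr C α β i) :
    lamb C δ β = (Finset.range k).sup fun i => sSup (C (Tr C α β i) ∩ Iio α) := by
  rw [lamb, rho2_eq_of_passes hαδ hk hpass]
  refine Finset.sup_congr rfl fun i hi => ?_
  have hi : i < k := Finset.mem_range.1 hi
  rw [Tr_eq_of_passes hαδ hk hpass hi.le,
    inter_Iio_eq_of_le_csInf hαδ (le_csInf_C_Tr_of_passes hαδ hk hpass hi)]

end Walk

theorem walk_lambda_max_general (κ : Cardinal.{0})
    (C : Ordinal.{0} → Set Ordinal.{0}) (hC : IsCSeq κ.ord C)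
    (α δ β : Ordinal) (h1 : α < δ) (h3 : β < κ.ord)
    (h4 : δ ∈ trL C α β) :
    lamb C α β = max (lamb C δ β) (lamb C α δ) := by
  obtain ⟨k, hk, hδ⟩ : ∃ k < rho2 C α β, Tr C α β k = δ := by simpa [trL] using h4
  have hpass : ∀ i < k, δ < Tr C α β i := fun i hi =>
    hδ ▸ Tr_lt_Tr (fun γ hγ => hC.1 γ (hγ.trans_lt h3)) hk hi
  rw [lamb_eq_max (exists_Tr_eq_of_lt_rho2 hk) hk.le, hδ, lamb_eq_of_passes h1.le hδ hpass]

/-- If `α < δ < β < κ` and `δ ∈ im(tr(α,β))`, then `λ(α,β) = max {λ(δ,β), λ(α,δ)}`. -/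
theorem walk_lambda_max (κ : Cardinal.{0}) (hreg : κ.IsRegular) (hκ : ℵ₀ < κ)
    (C : Ordinal.{0} → Set Ordinal.{0}) (hC : IsCSeq κ.ord C)
    (α δ β : Ordinal) (h1 : α < δ) (h2 : δ < β) (h3 : β < κ.ord)
    (h4 : δ ∈ trL C α β) :
    lamb C α β = max (lamb C δ β) (lamb C α δ) :=
  walk_lambda_max_general κ C hC α δ β h1 h3 h4

end
end
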